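/- Let d, m be positive integers with d dividing m and d < m. Then the set {y ∈ F_{2^m} : y ≠ 0 and Tr_{2^m/2^d}(y^{2^d−1}) = 0} is nonempty. -/
import Mathlib

open scoped Classical BigOperators

noncomputable section

/-- The finite field `F_{2^m}`. -/
abbrev Fq (m : ℕ) := GaloisField 2 m

noncomputable instance (m : ℕ) : Fintype (Fq m) := Fintype.ofFinite _

/-- The relative trace `Tr_{2^m/2^d} : F_{2^m} → F_{2^d}`,
`x ↦ Σ_{j<m/d} x^(2^(dj))`, viewed inside `F_{2^m}`. -/
def trRel (m d : ℕ) (x : Fq m) : Fq m := ∑ j ∈ Finset.range (m / d), x ^ 2 ^ (d * j)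

open Finset

/-! ### Auxiliary arithmetic lemmas -/

lemma aux_geom (r : ℕ) : ∀ k : ℕ, r * (∑ j ∈ range k, (r + 1) ^ j) + 1 = (r + 1) ^ k := by
  intro k
  induction k with
  | zero => simp
  | succ k ih =>
    rw [Finset.sum_range_succ, pow_succ]
    have h : r * ((∑ j ∈ range k, (r + 1) ^ j) + (r + 1) ^ k) + 1
        = (r * (∑ j ∈ range k, (r + 1) ^ j) + 1) + r * (r + 1) ^ k := by ring
    rw [h, ih]; ring

/-- Uniqueness of base-`q` digits. -/
lemma aux_digit_unique (q : ℕ) (hq : 2 ≤ q) :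
    ∀ (k : ℕ) (a b : ℕ → ℕ), (∀ j, a j < q) → (∀ j, b j < q) →
      (∑ j ∈ range k, a j * q ^ j) = (∑ j ∈ range k, b j * q ^ j) →
      ∀ j < k, a j = b j := by
  intro k
  induction k with
  | zero => intro a b _ _ _ j hj; omega
  | succ k ih =>
    intro a b ha hb heq j hj
    rw [Finset.sum_range_succ', Finset.sum_range_succ'] at heq
    have e1 : ∀ c : ℕ → ℕ,
        (∑ i ∈ range k, c (i + 1) * q ^ (i + 1))
          = (∑ i ∈ range k, c (i + 1) * q ^ i) * q := by
      intro c
      rw [Finset.sum_mul]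
      exact Finset.sum_congr rfl fun i _ => by ring
    rw [e1 a, e1 b] at heq
    simp only [pow_zero, mul_one] at heq
    set A := ∑ i ∈ range k, a (i + 1) * q ^ i with hA
    set B := ∑ i ∈ range k, b (i + 1) * q ^ i with hB
    have h0 : a 0 = b 0 := by
      have h1 : (A * q + a 0) % q = a 0 % q := by
        rw [mul_comm]; exact Nat.mul_add_mod q A (a 0)
      have h2 : (B * q + b 0) % q = b 0 % q := by
        rw [mul_comm]; exact Nat.mul_add_mod q B (b 0)
      rw [heq, h2] at h1
      rw [Nat.mod_eq_of_lt (hb 0), Nat.mod_eq_of_lt (ha 0)] at h1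
      omega
    have hAB : A = B := by
      have hABq : A * q = B * q := by omega
      exact Nat.eq_of_mul_eq_mul_right (by omega) hABq
    cases j with
    | zero => exact h0
    | succ j' =>
      exact ih (fun i => a (i + 1)) (fun i => b (i + 1)) (fun i => ha _) (fun i => hb _)
        hAB j' (by omega)

/-! ### Field-theoretic lemmas -/

lemma card_Fq (m : ℕ) (hm : m ≠ 0) : Fintype.card (Fq m) = 2 ^ m := by
  rw [← Nat.card_eq_fintype_card]
  exact GaloisField.card 2 m hm

lemma pow_card_Fq (m : ℕ) (hm : m ≠ 0) (x : Fq m) : x ^ 2 ^ m = x := by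
  rw [← card_Fq m hm]
  exact FiniteField.pow_card x

lemma sum_pow_eq_zero (m : ℕ) (hm : m ≠ 0) (k : ℕ) (hk : ¬ (2 ^ m - 1) ∣ k) :
    ∑ y : Fq m, y ^ k = 0 := by
  obtain ⟨ζ, hζ⟩ := IsCyclic.exists_generator (α := (Fq m)ˣ)
  have hord : orderOf ζ = 2 ^ m - 1 := by
    rw [orderOf_eq_card_of_forall_mem_zpowers hζ, Nat.card_units,
      Nat.card_eq_fintype_card, card_Fq m hm]
  have hzk : (ζ : Fq m) ^ k ≠ 1 := by
    intro h
    apply hk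
    rw [← hord]
    apply orderOf_dvd_of_pow_eq_one
    ext
    rw [Units.val_pow_eq_pow_val]
    exact h
  have hbij : Function.Bijective (fun y : Fq m => (ζ : Fq m) * y) :=
    mulLeft_bijective₀ _ (Units.ne_zero ζ)
  have h2 : ∑ y : Fq m, ((ζ : Fq m) * y) ^ k = ∑ y : Fq m, y ^ k :=
    Fintype.sum_bijective _ hbij _ _ (fun y => rfl)
  have h3 : ((ζ : Fq m) ^ k) * ∑ y : Fq m, y ^ k = ∑ y : Fq m, y ^ k := by
    rw [Finset.mul_sum, ← h2]
    exact Finset.sum_congr rfl fun y _ => (mul_pow _ _ _).symm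
  have h4 : (((ζ : Fq m) ^ k) - 1) * ∑ y : Fq m, y ^ k = 0 := by
    rw [sub_mul, h3, one_mul, sub_self]
  rcases mul_eq_zero.mp h4 with h | h
  · exact absurd (sub_eq_zero.mp h) hzk
  · exact h

lemma trRel_pow (d m : ℕ) (hd : 0 < d) (hdvd : d ∣ m) (hm : m ≠ 0) (x : Fq m) :
    trRel m d x ^ 2 ^ d = trRel m d x := by
  have hdn : d * (m / d) = m := Nat.mul_div_cancel' hdvd
  unfold trRel
  rw [sum_pow_char_pow]
  have e : ∀ j : ℕ, ((x ^ 2 ^ (d * j)) ^ 2 ^ d : Fq m) = x ^ 2 ^ (d * (j + 1)) := by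
    intro j
    have hex : d * j + d = d * (j + 1) := by ring
    rw [← pow_mul, ← pow_add, hex]
  simp only [e]
  have h1 := Finset.sum_range_succ (fun j => x ^ 2 ^ (d * j)) (m / d)
  have h2 := Finset.sum_range_succ' (fun j => x ^ 2 ^ (d * j)) (m / d)
  have hfn : x ^ 2 ^ (d * (m / d)) = x := by rw [hdn]; exact pow_card_Fq m hm x
  have hf0 : x ^ 2 ^ (d * 0) = x := by simp
  rw [hfn] at h1
  rw [hf0] at h2
  have h3 := h2.symm.trans h1
  exact add_right_cancel h3

/-! ### The combinatorial core -/

/-- If the exponent sum is divisible by `2^m - 1`, then all fibers of `p` over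
`{0, ..., m/d - 1}` have the same (positive) cardinality. -/
lemma classify (d m : ℕ) (hd : 0 < d) (hdvd : d ∣ m) (hn2 : 2 ≤ m / d)
    (p : Fin (2 ^ d - 1) → ℕ) (hp : ∀ i, p i < m / d)
    (hdiv : (2 ^ m - 1) ∣ ∑ i, (2 ^ d - 1) * 2 ^ (d * p i)) :
    ∃ c, 1 ≤ c ∧ ∀ j < m / d,
      (Finset.univ.filter (fun i => p i = j)).card = c := by
  have hq2 : 2 ≤ 2 ^ d := by
    calc 2 = 2 ^ 1 := rfl
    _ ≤ 2 ^ d := Nat.pow_le_pow_right (by norm_num) hd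
  have hdn : d * (m / d) = m := Nat.mul_div_cancel' hdvd
  set A : ℕ → ℕ := fun j => (Finset.univ.filter (fun i => p i = j)).card with hA
  have hmaps : ∀ i ∈ (Finset.univ : Finset (Fin (2 ^ d - 1))), p i ∈ range (m / d) :=
    fun i _ => mem_range.mpr (hp i)
  have hK : (∑ i, (2 ^ d - 1) * 2 ^ (d * p i))
      = ∑ j ∈ range (m / d), A j * ((2 ^ d - 1) * 2 ^ (d * j)) := by
    rw [← Finset.sum_fiberwise_of_maps_to' hmaps (fun v => (2 ^ d - 1) * 2 ^ (d * v))]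
    exact Finset.sum_congr rfl fun j _ => by
      rw [Finset.sum_const, smul_eq_mul]
  have hsum : (∑ j ∈ range (m / d), A j) = 2 ^ d - 1 := by
    have h := Finset.card_eq_sum_card_fiberwise hmaps
    rw [Finset.card_univ, Fintype.card_fin] at h
    exact h.symm
  set s := ∑ j ∈ range (m / d), 2 ^ (d * j) with hs
  set M := ∑ j ∈ range (m / d), A j * 2 ^ (d * j) with hM
  have hKM : (∑ j ∈ range (m / d), A j * ((2 ^ d - 1) * 2 ^ (d * j)))
      = (2 ^ d - 1) * M := by
    rw [hM, Finset.mul_sum]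
    exact Finset.sum_congr rfl fun j _ => by ring
  have hgeom : (2 ^ d - 1) * s + 1 = 2 ^ m := by
    have h := aux_geom (2 ^ d - 1) (m / d)
    have hNq : 2 ^ d - 1 + 1 = 2 ^ d := by omega
    rw [hNq] at h
    have hpm : ∀ j : ℕ, (2 ^ d : ℕ) ^ j = 2 ^ (d * j) := fun j => (pow_mul 2 d j).symm
    simp only [hpm] at h
    rw [hs, h, hdn]
  have hdiv2 : (2 ^ m - 1) = (2 ^ d - 1) * s := by omega
  rw [hK, hKM, hdiv2] at hdiv
  have hsM : s ∣ M := (Nat.mul_dvd_mul_iff_left (by omega : 0 < 2 ^ d - 1)).mp hdiv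
  obtain ⟨c, hc⟩ := hsM
  have hAle : ∀ j, A j ≤ 2 ^ d - 1 := by
    intro j
    calc A j ≤ (Finset.univ : Finset (Fin (2 ^ d - 1))).card := Finset.card_filter_le _ _
    _ = 2 ^ d - 1 := by rw [Finset.card_univ, Fintype.card_fin]
  have hMle : M ≤ (2 ^ d - 1) * s := by
    rw [hM, hs, Finset.mul_sum]
    exact Finset.sum_le_sum fun j _ => Nat.mul_le_mul_right _ (hAle j)
  have hspos : 0 < s := by
    rw [hs]
    apply Finset.sum_pos (fun j _ => pow_pos (by norm_num) _)
    exact Finset.nonempty_range_iff.mpr (by omega)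
  have hcN : c ≤ 2 ^ d - 1 := by
    rw [hc, mul_comm (2 ^ d - 1) s] at hMle
    exact Nat.le_of_mul_le_mul_left hMle hspos
  have hc1 : 1 ≤ c := by
    rcases Nat.eq_zero_or_pos c with h0 | h; swap
    · exact h
    exfalso
    rw [h0, mul_zero] at hc
    have hzz : ∀ j ∈ range (m / d), A j = 0 := by
      intro j hj
      have h3 := (Finset.sum_eq_zero_iff.mp hc) j hj
      rcases Nat.mul_eq_zero.mp h3 with h4 | h4
      · exact h4
      · have h5 : (0:ℕ) < 2 ^ (d * j) := pow_pos (by norm_num) _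
        omega
    have h5 : (∑ j ∈ range (m / d), A j) = 0 := Finset.sum_eq_zero hzz
    omega
  have hcq : c < 2 ^ d := by omega
  have hdig : ∀ j < m / d, A j = c := by
    apply aux_digit_unique (2 ^ d) hq2 (m / d) A (fun _ => c)
      (fun j => lt_of_le_of_lt (hAle j) (by omega)) (fun _ => hcq)
    have hL : (∑ j ∈ range (m / d), A j * (2 ^ d) ^ j) = M := by
      rw [hM]
      exact Finset.sum_congr rfl fun j _ => by rw [← pow_mul]
    have hR : (∑ j ∈ range (m / d), c * (2 ^ d) ^ j) = s * c := by
      rw [hs, Finset.sum_mul]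
      exact Finset.sum_congr rfl fun j _ => by rw [← pow_mul]; ring
    rw [hL, hR, hc]
  exact ⟨c, hc1, fun j hj => hdig j hj⟩

/-- Swapping the values `0` and `1` does not change a divisible exponent sum. -/
lemma swap_K (d m : ℕ) (hd : 0 < d) (hdvd : d ∣ m) (hn2 : 2 ≤ m / d)
    (p : Fin (2 ^ d - 1) → ℕ) (hp : ∀ i, p i < m / d)
    (hdiv : (2 ^ m - 1) ∣ ∑ i, (2 ^ d - 1) * 2 ^ (d * p i)) :
    (∑ i, (2 ^ d - 1) * 2 ^ (d * (Equiv.swap 0 1 (p i))))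
      = ∑ i, (2 ^ d - 1) * 2 ^ (d * p i) := by
  obtain ⟨c, hc1, hc⟩ := classify d m hd hdvd hn2 p hp hdiv
  have hmaps : ∀ i ∈ (Finset.univ : Finset (Fin (2 ^ d - 1))), p i ∈ range (m / d) :=
    fun i _ => mem_range.mpr (hp i)
  rw [← Finset.sum_fiberwise_of_maps_to' hmaps
      (fun v => (2 ^ d - 1) * 2 ^ (d * Equiv.swap 0 1 v)),
    ← Finset.sum_fiberwise_of_maps_to' hmaps (fun v => (2 ^ d - 1) * 2 ^ (d * v))]
  simp only [Finset.sum_const, smul_eq_mul]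
  have hLc : ∀ j ∈ range (m / d),
      (Finset.univ.filter (fun i => p i = j)).card
          * ((2 ^ d - 1) * 2 ^ (d * Equiv.swap 0 1 j))
        = c * ((2 ^ d - 1) * 2 ^ (d * Equiv.swap 0 1 j)) := by
    intro j hj; rw [hc j (mem_range.mp hj)]
  have hRc : ∀ j ∈ range (m / d),
      (Finset.univ.filter (fun i => p i = j)).card * ((2 ^ d - 1) * 2 ^ (d * j))
        = c * ((2 ^ d - 1) * 2 ^ (d * j)) := by
    intro j hj; rw [hc j (mem_range.mp hj)]
  rw [Finset.sum_congr rfl hLc, Finset.sum_congr rfl hRc]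
  have hswap_mem : ∀ j : ℕ, j ∈ range (m / d) ↔ Equiv.swap 0 1 j ∈ range (m / d) := by
    intro j
    rcases eq_or_ne j 0 with rfl | h0
    · simp only [Equiv.swap_apply_left, mem_range]; omega
    rcases eq_or_ne j 1 with rfl | h1
    · simp only [Equiv.swap_apply_right, mem_range]; omega
    · rw [Equiv.swap_apply_of_ne_of_ne h0 h1]
  have hsw : (∑ j ∈ range (m / d), c * ((2 ^ d - 1) * 2 ^ (d * Equiv.swap 0 1 j)))
      = ∑ j ∈ range (m / d), c * ((2 ^ d - 1) * 2 ^ (d * j)) :=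
    Finset.sum_equiv (Equiv.swap 0 1) hswap_mem (fun j _ => rfl)
  rw [hsw]

/-- if `d ∣ m` and `d < m`, then
`{y ∈ F_{2^m} : y ≠ 0 ∧ Tr_{2^m/2^d}(y^(2^d−1)) = 0}` is nonempty. -/
theorem stmt19 (d m : ℕ) (hd : 0 < d) (hdvd : d ∣ m) (hlt : d < m) :
    ∃ y : Fq m, y ≠ 0 ∧ trRel m d (y ^ (2 ^ d - 1)) = 0 := by
  by_contra hcon
  push_neg at hcon
  have hm : m ≠ 0 := by omega
  have hdn : d * (m / d) = m := Nat.mul_div_cancel' hdvd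
  have hn2 : 2 ≤ m / d := by
    obtain ⟨k, hk⟩ := hdvd
    subst hk
    rw [Nat.mul_div_cancel_left k (by omega : 0 < d)]
    have h1 : d * 1 < d * k := by omega
    have h2 := Nat.lt_of_mul_lt_mul_left h1
    omega
  have hq2 : 2 ≤ 2 ^ d := by
    calc 2 = 2 ^ 1 := rfl
    _ ≤ 2 ^ d := Nat.pow_le_pow_right (by norm_num) hd
  -- Part 1 : the sum `S` is nonzero
  have key1 : ∀ y : Fq m, y ≠ 0 →
      (trRel m d (y ^ (2 ^ d - 1))) ^ (2 ^ d - 1) = 1 := by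
    intro y hy
    have h1 : trRel m d (y ^ (2 ^ d - 1)) ≠ 0 := hcon y hy
    have h2 := trRel_pow d m hd hdvd hm (y ^ (2 ^ d - 1))
    have h3 : trRel m d (y ^ (2 ^ d - 1))
          * trRel m d (y ^ (2 ^ d - 1)) ^ (2 ^ d - 1)
        = trRel m d (y ^ (2 ^ d - 1)) * 1 := by
      rw [mul_one, ← pow_succ']
      rw [show 2 ^ d - 1 + 1 = 2 ^ d by omega]
      exact h2
    exact mul_left_cancel₀ h1 h3
  set S : Fq m := ∑ y : Fq m, (trRel m d (y ^ (2 ^ d - 1))) ^ (2 ^ d - 1) with hS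
  have hz : (trRel m d ((0 : Fq m) ^ (2 ^ d - 1))) ^ (2 ^ d - 1) = 0 := by
    have h0 : ((0 : Fq m) ^ (2 ^ d - 1)) = 0 := zero_pow (by omega : 2 ^ d - 1 ≠ 0)
    have h1 : trRel m d (0 : Fq m) = 0 := by
      unfold trRel
      apply Finset.sum_eq_zero
      intro j _
      exact zero_pow (by positivity)
    rw [h0, h1]
    exact zero_pow (by omega : 2 ^ d - 1 ≠ 0)
  have hS1 : S = ((2 ^ m - 1 : ℕ) : Fq m) := by
    rw [hS]
    rw [← Finset.sum_subset (Finset.subset_univ ((Finset.univ : Finset (Fq m)).erase 0))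
      (by
        intro x _ hx
        have hx0 : x = 0 := by
          by_contra hne
          exact hx (Finset.mem_erase.mpr ⟨hne, Finset.mem_univ x⟩)
        rw [hx0]
        exact hz)]
    rw [Finset.sum_congr rfl (fun y hy => key1 y (Finset.mem_erase.mp hy).1)]
    rw [Finset.sum_const, nsmul_eq_mul, mul_one,
      Finset.card_erase_of_mem (Finset.mem_univ _), Finset.card_univ, card_Fq m hm]
  have hSne : S ≠ 0 := by
    rw [hS1]
    have h0 : 0 < 2 ^ m := pow_pos (by norm_num) m
    have h2m : 2 ∣ 2 ^ m := dvd_pow_self 2 hm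
    have hodd : ¬ (2 ∣ 2 ^ m - 1) := by omega
    intro hcast
    rw [CharP.cast_eq_zero_iff (Fq m) 2] at hcast
    exact hodd hcast
  -- Part 2 : the sum `S` is zero
  have hexp : ∀ y : Fq m, (trRel m d (y ^ (2 ^ d - 1))) ^ (2 ^ d - 1)
      = ∑ p ∈ Fintype.piFinset (fun _ : Fin (2 ^ d - 1) => range (m / d)),
          y ^ (∑ i, (2 ^ d - 1) * 2 ^ (d * p i)) := by
    intro y
    have ht : trRel m d (y ^ (2 ^ d - 1))
        = ∑ j ∈ range (m / d), y ^ ((2 ^ d - 1) * 2 ^ (d * j)) := by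
      unfold trRel
      exact Finset.sum_congr rfl fun j _ => (pow_mul y (2 ^ d - 1) _).symm
    rw [ht, Finset.sum_pow']
    exact Finset.sum_congr rfl fun p _ => Finset.prod_pow_eq_pow_sum _ _ _
  have hS0 : S = 0 := by
    rw [hS]
    rw [Finset.sum_congr rfl (fun y _ => hexp y)]
    rw [Finset.sum_comm]
    apply Finset.sum_involution
      (g := fun p _ => fun i => Equiv.swap 0 1 (p i))
    · -- f a + f (g a) = 0
      intro p hp
      have hpv : ∀ i, p i < m / d := by
        intro i
        exact mem_range.mp ((Fintype.mem_piFinset.mp hp) i)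
      by_cases hdiv : (2 ^ m - 1) ∣ ∑ i, (2 ^ d - 1) * 2 ^ (d * p i)
      · rw [swap_K d m hd hdvd hn2 p hpv hdiv]
        exact CharTwo.add_self_eq_zero _
      · have hdiv2 : ¬ (2 ^ m - 1) ∣
            ∑ i, (2 ^ d - 1) * 2 ^ (d * (Equiv.swap 0 1 (p i))) := by
          intro hdd
          apply hdiv
          have hpv2 : ∀ i, Equiv.swap 0 1 (p i) < m / d := by
            intro i
            rcases eq_or_ne (p i) 0 with h0 | h0
            · rw [h0, Equiv.swap_apply_left]; omega
            rcases eq_or_ne (p i) 1 with h1 | h1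
            · rw [h1, Equiv.swap_apply_right]; omega
            · rw [Equiv.swap_apply_of_ne_of_ne h0 h1]; exact hpv i
          have h5 := swap_K d m hd hdvd hn2 (fun i => Equiv.swap 0 1 (p i)) hpv2 hdd
          simp only [Equiv.swap_apply_self] at h5
          rw [h5]
          exact hdd
        rw [sum_pow_eq_zero m hm _ hdiv, sum_pow_eq_zero m hm _ hdiv2, add_zero]
    · -- f a ≠ 0 → g a ≠ a
      intro p hp hfne
      have hpv : ∀ i, p i < m / d := by
        intro i
        exact mem_range.mp ((Fintype.mem_piFinset.mp hp) i)
      have hdiv : (2 ^ m - 1) ∣ ∑ i, (2 ^ d - 1) * 2 ^ (d * p i) := by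
        by_contra h
        exact hfne (sum_pow_eq_zero m hm _ h)
      obtain ⟨c, hc1, hc⟩ := classify d m hd hdvd hn2 p hpv hdiv
      have h0 : (Finset.univ.filter (fun i => p i = 0)).card = c := hc 0 (by omega)
      have hne : (Finset.univ.filter (fun i => p i = 0)).Nonempty :=
        Finset.card_pos.mp (by omega)
      obtain ⟨i, hi⟩ := hne
      have hpi : p i = 0 := (Finset.mem_filter.mp hi).2
      intro heq
      have hci := congrFun heq i
      rw [hpi, Equiv.swap_apply_left] at hci
      exact one_ne_zero hci
    · -- g (g a) = a
      intro p hp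
      funext i
      exact Equiv.swap_apply_self _ _ _
    · -- g a ∈ s
      intro p hp
      rw [Fintype.mem_piFinset]
      intro i
      have hpv : p i < m / d := mem_range.mp ((Fintype.mem_piFinset.mp hp) i)
      rw [mem_range]
      rcases eq_or_ne (p i) 0 with h0 | h0
      · rw [h0, Equiv.swap_apply_left]; omega
      rcases eq_or_ne (p i) 1 with h1 | h1
      · rw [h1, Equiv.swap_apply_right]; omega
      · rw [Equiv.swap_apply_of_ne_of_ne h0 h1]; exact hpv
  exact hSne hS0
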